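/- arXiv:math/0401368 — 8 statements merged into one kernel-verified Lean document; each statement's English description precedes it below -/
import Mathlib

section
/- Let p, q : X → [0,∞) be probability densities with respect to a measure μ (∫ p dμ = ∫ q dμ = 1), and let g be measurable with m ≤ g(q(x)/p(x)) ≤ M for μ-a.e. x. Then |∫ (q - p)·g(q/p) dμ| ≤ (1/2)(M - m)·∫ |q - p| dμ. -/
/-!
Since `q - p` integrates to zero, `g (q / p)` may be replaced by `g (q / p) - c` for any constant
`c`. Taking `c` the midpoint of `[m, M]` makes this factor at most `(M - m) / 2` in absolute value.
-/

open MeasureTheory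

section

variable {X : Type*} [MeasurableSpace X] {μ : Measure X} {f h : X → ℝ}

theorem integral_mul_sub_const_of_integral_eq_zero (hf : Integrable f μ)
    (hf0 : ∫ x, f x ∂μ = 0) (hfh : Integrable (fun x => f x * h x) μ) (c : ℝ) :
    ∫ x, f x * (h x - c) ∂μ = ∫ x, f x * h x ∂μ := by
  simp_rw [mul_sub]
  rw [integral_sub hfh (hf.mul_const c), integral_mul_const, hf0, zero_mul, sub_zero]

theorem abs_integral_mul_le_of_integral_eq_zero (hf : Integrable f μ)
    (hf0 : ∫ x, f x ∂μ = 0) (hfh : Integrable (fun x => f x * h x) μ) {m M : ℝ}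
    (hmM : ∀ᵐ x ∂μ, m ≤ h x ∧ h x ≤ M) :
    |∫ x, f x * h x ∂μ| ≤ (1 / 2) * (M - m) * ∫ x, |f x| ∂μ := by
  set c := (M + m) / 2 with hc
  have hfhc : Integrable (fun x => f x * (h x - c)) μ := by
    simpa only [mul_sub, Pi.sub_def] using hfh.sub (hf.mul_const c)
  rw [← integral_mul_sub_const_of_integral_eq_zero hf hf0 hfh c, ← integral_const_mul]
  refine abs_integral_le_integral_abs.trans
    (integral_mono_ae hfhc.abs (hf.abs.const_mul _) ?_)
  filter_upwards [hmM] with x ⟨hm, hM⟩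
  have hmid : |h x - c| ≤ (1 / 2) * (M - m) := abs_le.2 ⟨by linarith, by linarith⟩
  rw [abs_mul, mul_comm]
  exact mul_le_mul_of_nonneg_right hmid (abs_nonneg _)

end

theorem delta_divergence_bound_tv_general
    {X : Type*} [MeasurableSpace X] (μ : Measure X)
    (p q : X → ℝ) (g : ℝ → ℝ)
    (hp : Integrable p μ) (hq : Integrable q μ)
    (hp1 : ∫ x, p x ∂μ = 1) (hq1 : ∫ x, q x ∂μ = 1)
    (m M : ℝ)
    (hbound : ∀ᵐ x ∂μ, m ≤ g (q x / p x) ∧ g (q x / p x) ≤ M)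
    (hint : Integrable (fun x => (q x - p x) * g (q x / p x)) μ) :
    |∫ x, (q x - p x) * g (q x / p x) ∂μ| ≤
      (1 / 2) * (M - m) * ∫ x, |q x - p x| ∂μ := by
  have hqp0 : ∫ x, (q x - p x) ∂μ = 0 := by
    rw [integral_sub hq hp, hp1, hq1, sub_self]
  exact abs_integral_mul_le_of_integral_eq_zero (hq.sub hp) hqp0 hint hbound

theorem delta_divergence_bound_tv
    {X : Type*} [MeasurableSpace X] (μ : Measure X)
    (p q : X → ℝ) (g : ℝ → ℝ)
    (hp0 : ∀ x, 0 ≤ p x) (hq0 : ∀ x, 0 ≤ q x)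
    (hpm : Measurable p) (hqm : Measurable q) (hgm : Measurable g)
    (hp : Integrable p μ) (hq : Integrable q μ)
    (hp1 : ∫ x, p x ∂μ = 1) (hq1 : ∫ x, q x ∂μ = 1)
    (m M : ℝ)
    (hbound : ∀ᵐ x ∂μ, m ≤ g (q x / p x) ∧ g (q x / p x) ≤ M)
    (hint : Integrable (fun x => (q x - p x) * g (q x / p x)) μ) :
    |∫ x, (q x - p x) * g (q x / p x) ∂μ| ≤
      (1 / 2) * (M - m) * ∫ x, |q x - p x| ∂μ :=
  delta_divergence_bound_tv_general μ p q g hp hq hp1 hq1 m M hbound hint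
end

section
/- Let p, q : X → [0,∞) be probability densities with respect to μ, and let g : [0,∞) → ℝ be measurable with the property that |g(t) - g(1)| ≤ K·|t - 1|^α for all t ≥ 0, where K > 0 and α > 0. Then |∫ (q - p)·g(q/p) dμ| ≤ K·∫ p^{-α}·|q - p|^{α+1} dμ. -/
open Set MeasureTheory

theorem delta_divergence_bound_chi_alpha
    {X : Type*} [MeasurableSpace X] (μ : Measure X)
    (p q : X → ℝ) (g : ℝ → ℝ) (K α : ℝ)
    (hK : 0 < K) (hα : 0 < α)
    (hp0 : ∀ x, 0 ≤ p x) (hq0 : ∀ x, 0 ≤ q x)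
    (hppos : ∀ᵐ x ∂μ, 0 < p x)
    (hpm : Measurable p) (hqm : Measurable q) (hgm : Measurable g)
    (hp : Integrable p μ) (hq : Integrable q μ)
    (hp1 : ∫ x, p x ∂μ = 1) (hq1 : ∫ x, q x ∂μ = 1)
    (hg : ∀ t ≥ (0:ℝ), |g t - g 1| ≤ K * |t - 1| ^ α)
    (hint : Integrable (fun x => (q x - p x) * g (q x / p x)) μ)
    (hint2 : Integrable (fun x => p x ^ (-α) * |q x - p x| ^ (α + 1)) μ) :
    |∫ x, (q x - p x) * g (q x / p x) ∂μ| ≤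
      K * ∫ x, p x ^ (-α) * |q x - p x| ^ (α + 1) ∂μ := by
  have hqp : Integrable (fun x => (q x - p x) * g 1) μ := (hq.sub hp).mul_const _
  have hzero : ∫ x, (q x - p x) * g 1 ∂μ = 0 := by
    rw [integral_mul_const, integral_sub hq hp, hq1, hp1]
    ring
  have hkey : ∫ x, (q x - p x) * g (q x / p x) ∂μ
      = ∫ x, (q x - p x) * (g (q x / p x) - g 1) ∂μ := by
    rw [← sub_zero (∫ x, (q x - p x) * g (q x / p x) ∂μ), ← hzero,
      ← integral_sub hint hqp]
    congr 1; ext x; ring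
  rw [hkey, ← integral_const_mul]
  have hintK : Integrable (fun x => K * (p x ^ (-α) * |q x - p x| ^ (α + 1))) μ :=
    hint2.const_mul K
  have hbound : ∀ᵐ x ∂μ, ‖(q x - p x) * (g (q x / p x) - g 1)‖
      ≤ K * (p x ^ (-α) * |q x - p x| ^ (α + 1)) := by
    filter_upwards [hppos] with x hx
    have hdiv : (0:ℝ) ≤ q x / p x := div_nonneg (hq0 x) (hp0 x)
    have h1 := hg _ hdiv
    have heq : |q x / p x - 1| = |q x - p x| / p x := by
      rw [div_sub_one hx.ne', abs_div, abs_of_pos hx]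
    rw [Real.norm_eq_abs, abs_mul]
    calc |q x - p x| * |g (q x / p x) - g 1|
        ≤ |q x - p x| * (K * |q x / p x - 1| ^ α) := by
          exact mul_le_mul_of_nonneg_left h1 (abs_nonneg _)
      _ = K * (p x ^ (-α) * |q x - p x| ^ (α + 1)) := by
          rw [heq, Real.div_rpow (abs_nonneg _) hx.le,
            Real.rpow_add' (abs_nonneg _) (by positivity), Real.rpow_one,
            Real.rpow_neg hx.le]
          field_simp
  have heqf : (fun x => (q x - p x) * g (q x / p x) - (q x - p x) * g 1)
      =ᵐ[μ] fun x => (q x - p x) * (g (q x / p x) - g 1) :=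
    Filter.Eventually.of_forall fun x => (mul_sub _ _ _).symm
  calc |∫ x, (q x - p x) * (g (q x / p x) - g 1) ∂μ|
      = ‖∫ x, (q x - p x) * (g (q x / p x) - g 1) ∂μ‖ := (Real.norm_eq_abs _).symm
    _ ≤ ∫ x, ‖(q x - p x) * (g (q x / p x) - g 1)‖ ∂μ :=
        norm_integral_le_integral_norm _
    _ ≤ ∫ x, K * (p x ^ (-α) * |q x - p x| ^ (α + 1)) ∂μ :=
        integral_mono_ae ((hint.sub hqp).congr heqf).norm hintK hbound
end

section
/- If f : [0,∞) → ℝ can be written as f(t) = (t-1)·g(t) for some monotone nondecreasing g, then for any probability densities p, q with respect to μ, the f-divergence I_f(Q,P) := ∫ p(x)·f(q(x)/p(x)) dμ(x) is nonnegative. -/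
open Set MeasureTheory

theorem f_divergence_nonneg_D0
    {X : Type*} [MeasurableSpace X] (μ : Measure X)
    (p q : X → ℝ) (f g : ℝ → ℝ)
    (hp0 : ∀ x, 0 ≤ p x) (hq0 : ∀ x, 0 ≤ q x)
    (hppos : ∀ᵐ x ∂μ, 0 < p x)
    (hpm : Measurable p) (hqm : Measurable q) (hgm : Measurable g)
    (hp : Integrable p μ) (hq : Integrable q μ)
    (hp1 : ∫ x, p x ∂μ = 1) (hq1 : ∫ x, q x ∂μ = 1)
    (hg : MonotoneOn g (Ici 0))
    (hfg : ∀ t ≥ (0:ℝ), f t = (t - 1) * g t)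
    (hint : Integrable (fun x => p x * f (q x / p x)) μ) :
    0 ≤ ∫ x, p x * f (q x / p x) ∂μ := by
  set h : X → ℝ := fun x => (q x - p x) * (g (q x / p x) - g 1) with hh
  have haekey : ∀ᵐ x ∂μ, p x * f (q x / p x) = h x + g 1 * (q x - p x) := by
    filter_upwards [hppos] with x hx
    have ht : 0 ≤ q x / p x := div_nonneg (hq0 x) (hp0 x)
    rw [hfg _ ht, hh]
    have : p x * (q x / p x) = q x := mul_div_cancel₀ (q x) (ne_of_gt hx)
    have e1 : p x * ((q x / p x - 1) * g (q x / p x))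
        = (p x * (q x / p x) - p x) * g (q x / p x) := by ring
    simp only
    rw [e1, this]; ring
  have hint2 : Integrable (fun x => g 1 * (q x - p x)) μ := (hq.sub hp).const_mul _
  have hinth : Integrable h μ := by
    have : Integrable (fun x => p x * f (q x / p x) - g 1 * (q x - p x)) μ :=
      hint.sub hint2
    refine this.congr ?_
    filter_upwards [haekey] with x hx
    rw [hx]; ring
  have heq : ∫ x, p x * f (q x / p x) ∂μ = ∫ x, h x ∂μ + g 1 * ∫ x, (q x - p x) ∂μ := by
    rw [integral_congr_ae haekey, integral_add hinth hint2, integral_const_mul]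
  have hzero : ∫ x, (q x - p x) ∂μ = 0 := by
    rw [integral_sub hq hp, hp1, hq1]; ring
  have hnn : 0 ≤ ∫ x, h x ∂μ := by
    refine integral_nonneg_of_ae ?_
    filter_upwards [hppos] with x hx
    simp only [hh, Pi.zero_apply]
    have ht : 0 ≤ q x / p x := div_nonneg (hq0 x) (hp0 x)
    rcases le_or_gt (p x) (q x) with hle | hlt
    · have h1 : (1:ℝ) ≤ q x / p x := (one_le_div hx).mpr hle
      have := hg (mem_Ici.mpr (zero_le_one)) (mem_Ici.mpr ht) h1
      exact mul_nonneg (by linarith) (by linarith)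
    · have h1 : q x / p x ≤ 1 := (div_le_one hx).mpr hlt.le
      have := hg (mem_Ici.mpr ht) (mem_Ici.mpr (zero_le_one)) h1
      nlinarith
  rw [heq, hzero]
  simpa using hnn
end

section
/- If g : [0,∞) → ℝ is monotone nondecreasing, then for any probability densities p, q with respect to μ: δ_g(Q,P) ≥ |δ̄_g(Q,P) − V(Q,P)·I_g(Q,P)|, where δ_g(Q,P) = ∫ (q-p)·g(q/p) dμ, δ̄_g(Q,P) = ∫ |q-p|·g(q/p) dμ, V(Q,P) = ∫ |q-p| dμ, and I_g(Q,P) = ∫ p·g(q/p) dμ. -/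
open Set MeasureTheory

private lemma inner_eq_aux {X : Type*} [MeasurableSpace X] (P : Measure X)
    [IsProbabilityMeasure P] (w v : X → ℝ)
    (hw : Integrable w P) (hv : Integrable v P)
    (hwv : Integrable (fun y => w y * v y) P) (x : X) :
    ∫ y, (w x - w y) * (v x - v y) ∂P =
      w x * v x - w x * ∫ y, v y ∂P - (∫ y, w y ∂P) * v x + ∫ y, w y * v y ∂P := by
  have h : (fun y => (w x - w y) * (v x - v y)) =
      (fun y => (w x * v x - w x * v y) - (w y * v x - w y * v y)) := by
    funext y; ring
  have h1 : Integrable (fun y => w x * v x - w x * v y) P :=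
    (integrable_const _).sub (hv.const_mul _)
  have h2 : Integrable (fun y => w y * v x - w y * v y) P := (hw.mul_const _).sub hwv
  have h3 : Integrable (fun y : X => w x * v x) P := integrable_const _
  have h4 : Integrable (fun y => w x * v y) P := hv.const_mul _
  have h5 : Integrable (fun y => w y * v x) P := hw.mul_const _
  rw [h, integral_sub h1 h2, integral_sub h3 h4, integral_sub h5 hwv,
    integral_const, integral_const_mul, integral_mul_const]
  simp; ring

private lemma double_eq_aux {X : Type*} [MeasurableSpace X] (P : Measure X)
    [IsProbabilityMeasure P] (w v : X → ℝ)
    (hw : Integrable w P) (hv : Integrable v P)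
    (hwv : Integrable (fun y => w y * v y) P) :
    ∫ x, ∫ y, (w x - w y) * (v x - v y) ∂P ∂P =
      2 * ((∫ y, w y * v y ∂P) - (∫ y, w y ∂P) * ∫ y, v y ∂P) := by
  have h : (fun x => ∫ y, (w x - w y) * (v x - v y) ∂P) =
      (fun x => w x * v x - w x * ∫ y, v y ∂P - (∫ y, w y ∂P) * v x + ∫ y, w y * v y ∂P) := by
    funext x; exact inner_eq_aux P w v hw hv hwv x
  have h1 : Integrable (fun x => w x * v x - w x * ∫ y, v y ∂P - (∫ y, w y ∂P) * v x) P :=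
    (hwv.sub (hw.mul_const _)).sub (hv.const_mul _)
  have h2 : Integrable (fun x => w x * v x - w x * ∫ y, v y ∂P) P := hwv.sub (hw.mul_const _)
  have h3 : Integrable (fun x => (∫ y, w y ∂P) * v x) P := hv.const_mul _
  have h4 : Integrable (fun x => w x * ∫ y, v y ∂P) P := hw.mul_const _
  rw [h, integral_add h1 (integrable_const _), integral_sub h2 h3, integral_sub hwv h4,
    integral_const, integral_const_mul, integral_mul_const]
  simp; ring

private lemma core_aux {X : Type*} [MeasurableSpace X] (P : Measure X)
    [IsProbabilityMeasure P] (u v : X → ℝ) (S : Set X)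
    (hu : Integrable u P) (hv : Integrable v P)
    (huv : Integrable (fun y => u y * v y) P)
    (hauv : Integrable (fun y => |u y| * v y) P)
    (hu0 : ∫ y, u y ∂P = 0)
    (hS : ∀ᵐ x ∂P, x ∈ S)
    (hmono : ∀ x ∈ S, ∀ y ∈ S, 0 ≤ (u x - u y) * (v x - v y)) :
    |(∫ y, |u y| * v y ∂P) - (∫ y, |u y| ∂P) * ∫ y, v y ∂P| ≤ ∫ y, u y * v y ∂P := by
  have hA : ∫ x, ∫ y, (|u x| - |u y|) * (v x - v y) ∂P ∂P =
      2 * ((∫ y, |u y| * v y ∂P) - (∫ y, |u y| ∂P) * ∫ y, v y ∂P) := by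
    simpa using double_eq_aux P (fun y => |u y|) v hu.abs hv hauv
  have hB := double_eq_aux P u v hu hv huv
  rw [hu0] at hB
  have hBinner : ∀ x : X, Integrable (fun y => (u x - u y) * (v x - v y)) P := by
    intro x
    have h : (fun y => (u x - u y) * (v x - v y)) =
        (fun y => (u x * v x - u x * v y) - (u y * v x - u y * v y)) := by
      funext y; ring
    have h1 : Integrable (fun y => u x * v x - u x * v y) P :=
      (integrable_const _).sub (hv.const_mul _)
    have h2 : Integrable (fun y => u y * v x - u y * v y) P := (hu.mul_const _).sub huv
    rw [h]; exact h1.sub h2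
  have hBint : Integrable (fun x => ∫ y, (u x - u y) * (v x - v y) ∂P) P := by
    have h : (fun x => ∫ y, (u x - u y) * (v x - v y) ∂P) =
        (fun x => u x * v x - u x * ∫ y, v y ∂P - (∫ y, u y ∂P) * v x + ∫ y, u y * v y ∂P) := by
      funext x; exact inner_eq_aux P u v hu hv huv x
    have h1 : Integrable
        (fun x => u x * v x - u x * ∫ y, v y ∂P - (∫ y, u y ∂P) * v x) P :=
      (huv.sub (hu.mul_const _)).sub (hv.const_mul _)
    rw [h]; exact h1.add (integrable_const _)
  have hkey : |∫ x, ∫ y, (|u x| - |u y|) * (v x - v y) ∂P ∂P| ≤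
      ∫ x, ∫ y, (u x - u y) * (v x - v y) ∂P ∂P := by
    calc |∫ x, ∫ y, (|u x| - |u y|) * (v x - v y) ∂P ∂P|
        ≤ ∫ x, |∫ y, (|u x| - |u y|) * (v x - v y) ∂P| ∂P := by
          simpa [Real.norm_eq_abs] using
            norm_integral_le_integral_norm (fun x => ∫ y, (|u x| - |u y|) * (v x - v y) ∂P) (μ := P)
      _ ≤ ∫ x, ∫ y, (u x - u y) * (v x - v y) ∂P ∂P := by
          refine integral_mono_of_nonneg (Filter.Eventually.of_forall fun x => abs_nonneg _)
            hBint ?_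
          filter_upwards [hS] with x hx
          calc |∫ y, (|u x| - |u y|) * (v x - v y) ∂P|
              ≤ ∫ y, |(|u x| - |u y|)| * |v x - v y| ∂P := by
                simpa [Real.norm_eq_abs, abs_mul] using
                  norm_integral_le_integral_norm (fun y => (|u x| - |u y|) * (v x - v y)) (μ := P)
            _ ≤ ∫ y, (u x - u y) * (v x - v y) ∂P := by
                refine integral_mono_of_nonneg
                  (Filter.Eventually.of_forall fun y => mul_nonneg (abs_nonneg _) (abs_nonneg _))
                  (hBinner x) ?_
                filter_upwards [hS] with y hy
                calc |(|u x| - |u y|)| * |v x - v y|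
                    ≤ |u x - u y| * |v x - v y| :=
                      mul_le_mul_of_nonneg_right (abs_abs_sub_abs_le_abs_sub _ _) (abs_nonneg _)
                  _ = |(u x - u y) * (v x - v y)| := (abs_mul _ _).symm
                  _ = (u x - u y) * (v x - v y) := abs_of_nonneg (hmono x hx y hy)
  rw [hA, hB] at hkey
  have h2 : |2 * ((∫ y, |u y| * v y ∂P) - (∫ y, |u y| ∂P) * ∫ y, v y ∂P)| =
      2 * |(∫ y, |u y| * v y ∂P) - (∫ y, |u y| ∂P) * ∫ y, v y ∂P| := by
    rw [abs_mul]; norm_num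
  rw [h2] at hkey
  linarith [hkey]
theorem delta_divergence_chebyshev_refinement
    {X : Type*} [MeasurableSpace X] (μ : Measure X)
    (p q : X → ℝ) (g : ℝ → ℝ)
    (hp0 : ∀ x, 0 ≤ p x) (hq0 : ∀ x, 0 ≤ q x)
    (hppos : ∀ᵐ x ∂μ, 0 < p x)
    (hpm : Measurable p) (hqm : Measurable q) (hgm : Measurable g)
    (hp : Integrable p μ) (hq : Integrable q μ)
    (hp1 : ∫ x, p x ∂μ = 1) (hq1 : ∫ x, q x ∂μ = 1)
    (hg : MonotoneOn g (Ici 0))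
    (hint : Integrable (fun x => (q x - p x) * g (q x / p x)) μ)
    (hint2 : Integrable (fun x => |q x - p x| * g (q x / p x)) μ)
    (hint3 : Integrable (fun x => |q x - p x|) μ)
    (hint4 : Integrable (fun x => p x * g (q x / p x)) μ) :
    |(∫ x, |q x - p x| * g (q x / p x) ∂μ) -
        (∫ x, |q x - p x| ∂μ) * ∫ x, p x * g (q x / p x) ∂μ| ≤
      ∫ x, (q x - p x) * g (q x / p x) ∂μ := by
  have hpn : Measurable (fun x => (p x).toNNReal) := measurable_real_toNNReal.comp hpm
  set P : Measure X := μ.withDensity (fun x => ((p x).toNNReal : ENNReal)) with hPdef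
  set u : X → ℝ := fun x => q x / p x - 1 with hudef
  set v : X → ℝ := fun x => g (q x / p x) with hvdef
  have hsmul : ∀ (f : X → ℝ) (x : X), (p x).toNNReal • f x = p x * f x := by
    intro f x
    rw [NNReal.smul_def, smul_eq_mul, Real.coe_toNNReal _ (hp0 x)]
  have key : ∀ f : X → ℝ, ∫ x, f x ∂P = ∫ x, p x * f x ∂μ := by
    intro f
    rw [hPdef, integral_withDensity_eq_integral_smul hpn f]
    exact integral_congr_ae (Filter.Eventually.of_forall fun x => hsmul f x)
  have hiff : ∀ f : X → ℝ, Integrable f P ↔ Integrable (fun x => p x * f x) μ := by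
    intro f
    rw [hPdef, integrable_withDensity_iff_integrable_smul hpn]
    have h : (fun x => (p x).toNNReal • f x) = fun x => p x * f x := funext fun x => hsmul f x
    rw [h]
  have hProb : IsProbabilityMeasure P := by
    constructor
    rw [hPdef, withDensity_apply _ MeasurableSet.univ, Measure.restrict_univ]
    have h1 : ∀ x : X, ((p x).toNNReal : ENNReal) = ENNReal.ofReal (p x) := fun x => rfl
    simp_rw [h1]
    rw [← ofReal_integral_eq_lintegral_ofReal hp (Filter.Eventually.of_forall hp0), hp1]
    simp
  -- pointwise a.e. identities
  have heq1 : (fun x => p x * u x) =ᵐ[μ] fun x => q x - p x := by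
    filter_upwards [hppos] with x hx
    have hne : p x ≠ 0 := ne_of_gt hx
    simp only [hudef]
    field_simp
  have heq2 : (fun x => p x * (u x * v x)) =ᵐ[μ] fun x => (q x - p x) * g (q x / p x) := by
    filter_upwards [hppos] with x hx
    have hne : p x ≠ 0 := ne_of_gt hx
    simp only [hudef, hvdef]
    rw [show p x * ((q x / p x - 1) * g (q x / p x)) =
      (p x * (q x / p x - 1)) * g (q x / p x) from by ring]
    congr 1
    field_simp
  have habs : ∀ᵐ x ∂μ, p x * |u x| = |q x - p x| := by
    filter_upwards [hppos] with x hx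
    have hne : p x ≠ 0 := ne_of_gt hx
    have : p x * |u x| = |p x * u x| := by
      rw [abs_mul, abs_of_pos hx]
    rw [this]
    congr 1
    simp only [hudef]
    field_simp
  have heq3 : (fun x => p x * (|u x| * v x)) =ᵐ[μ] fun x => |q x - p x| * g (q x / p x) := by
    filter_upwards [habs] with x hx
    rw [show p x * (|u x| * v x) = (p x * |u x|) * v x from by ring, hx]
  have heq4 : (fun x => p x * |u x|) =ᵐ[μ] fun x => |q x - p x| := habs
  -- integrability transfers
  have Iu : Integrable u P := (hiff u).mpr ((hq.sub hp).congr heq1.symm)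
  have Iv : Integrable v P := (hiff v).mpr hint4
  have Iuv : Integrable (fun x => u x * v x) P :=
    (hiff _).mpr (hint.congr heq2.symm)
  have Iauv : Integrable (fun x => |u x| * v x) P :=
    (hiff _).mpr (hint2.congr heq3.symm)
  -- integral transfers
  have Euv : ∫ x, u x * v x ∂P = ∫ x, (q x - p x) * g (q x / p x) ∂μ := by
    rw [key]; exact integral_congr_ae heq2
  have Eauv : ∫ x, |u x| * v x ∂P = ∫ x, |q x - p x| * g (q x / p x) ∂μ := by
    rw [key]; exact integral_congr_ae heq3
  have Eau : ∫ x, |u x| ∂P = ∫ x, |q x - p x| ∂μ := by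
    rw [key]; exact integral_congr_ae heq4
  have Ev : ∫ x, v x ∂P = ∫ x, p x * g (q x / p x) ∂μ := key v
  have Eu0 : ∫ x, u x ∂P = 0 := by
    rw [key, integral_congr_ae heq1, integral_sub hq hp, hp1, hq1]
    ring
  -- monotonicity set
  have hS : ∀ᵐ x ∂P, x ∈ {x : X | 0 < p x} :=
    hppos.filter_mono (withDensity_absolutelyContinuous μ _).ae_le
  have hmono : ∀ x ∈ {x : X | 0 < p x}, ∀ y ∈ {x : X | 0 < p x},
      0 ≤ (u x - u y) * (v x - v y) := by
    intro x hx y hy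
    have hrx : (0:ℝ) ≤ q x / p x := div_nonneg (hq0 x) (le_of_lt hx)
    have hry : (0:ℝ) ≤ q y / p y := div_nonneg (hq0 y) (le_of_lt hy)
    rcases le_total (q x / p x) (q y / p y) with h | h
    · have h1 : u x - u y ≤ 0 := by simp only [hudef]; linarith
      have h2 : v x - v y ≤ 0 := by
        simp only [hvdef]
        have := hg (mem_Ici.mpr hrx) (mem_Ici.mpr hry) h
        linarith
      nlinarith [mul_nonneg (neg_nonneg.2 h1) (neg_nonneg.2 h2)]
    · have h1 : 0 ≤ u x - u y := by simp only [hudef]; linarith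
      have h2 : 0 ≤ v x - v y := by
        simp only [hvdef]
        have := hg (mem_Ici.mpr hry) (mem_Ici.mpr hrx) h
        linarith
      exact mul_nonneg h1 h2
  rw [← Euv, ← Eauv, ← Eau, ← Ev]
  exact core_aux P u v _ Iu Iv Iuv Iauv Eu0 hS hmono
end

section
/- If g : [0,∞) → ℝ satisfies g(t) ≤ g(1) ≤ g(s) for all 0 ≤ t ≤ 1 ≤ s (i.e., g ∈ Le₁), then for any probability densities p, q with respect to μ, δ_g(Q,P) := ∫ (q - p)·g(q/p) dμ ≥ 0. -/
open Set MeasureTheory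

theorem delta_divergence_nonneg_Le1
    {X : Type*} [MeasurableSpace X] (μ : Measure X)
    (p q : X → ℝ) (g : ℝ → ℝ)
    (hp0 : ∀ x, 0 ≤ p x) (hq0 : ∀ x, 0 ≤ q x)
    (hppos : ∀ᵐ x ∂μ, 0 < p x)
    (hpm : Measurable p) (hqm : Measurable q) (hgm : Measurable g)
    (hp : Integrable p μ) (hq : Integrable q μ)
    (hp1 : ∫ x, p x ∂μ = 1) (hq1 : ∫ x, q x ∂μ = 1)
    (hg : ∀ t s : ℝ, 0 ≤ t → t ≤ 1 → 1 ≤ s → g t ≤ g 1 ∧ g 1 ≤ g s)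
    (hint : Integrable (fun x => (q x - p x) * g (q x / p x)) μ) :
    0 ≤ ∫ x, (q x - p x) * g (q x / p x) ∂μ := by
  have key : ∀ᵐ x ∂μ, (q x - p x) * g 1 ≤ (q x - p x) * g (q x / p x) := by
    filter_upwards [hppos] with x hpx
    rcases le_or_gt (q x) (p x) with h | h
    · have ht : q x / p x ≤ 1 := (div_le_one hpx).mpr h
      have := (hg (q x / p x) 1 (div_nonneg (hq0 x) (hp0 x)) ht le_rfl).1
      have hqp : q x - p x ≤ 0 := sub_nonpos.mpr h
      exact mul_le_mul_of_nonpos_left this hqp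
    · have hs : 1 ≤ q x / p x := (one_le_div hpx).mpr h.le
      have := (hg 0 (q x / p x) le_rfl zero_le_one hs).2
      exact mul_le_mul_of_nonneg_left this (sub_nonneg.mpr h.le)
  have hint2 : Integrable (fun x => (q x - p x) * g 1) μ := (hq.sub hp).mul_const _
  have h0 : ∫ x, (q x - p x) * g 1 ∂μ = 0 := by
    rw [integral_mul_const, integral_sub hq hp, hq1, hp1]
    ring
  calc (0:ℝ) = ∫ x, (q x - p x) * g 1 ∂μ := h0.symm
    _ ≤ ∫ x, (q x - p x) * g (q x / p x) ∂μ := integral_mono_ae hint2 hint key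
end

section
/- Let g : [0,∞) → ℝ be differentiable on (0,∞) with φ ≤ t·g'(t) ≤ Φ for all t > 0. Then for any probability densities p, q with respect to μ: φ·J(Q,P) ≤ δ_g(Q,P) ≤ Φ·J(Q,P), where J(Q,P) = ∫ (q - p)·ln(q/p) dμ is the Jeffreys divergence. -/
open Set MeasureTheory

private lemma mono_aux (g g' : ℝ → ℝ) (c : ℝ)
    (hderiv : ∀ t > (0:ℝ), HasDerivAt g (g' t) t)
    (hb : ∀ t > (0:ℝ), c ≤ t * g' t) :
    MonotoneOn (fun t => g t - c * Real.log t) (Set.Ioi 0) := by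
  have hd : ∀ t ∈ Set.Ioi (0:ℝ), HasDerivAt (fun t => g t - c * Real.log t)
      (g' t - c * t⁻¹) t := by
    intro t ht
    exact (hderiv t ht).sub ((Real.hasDerivAt_log (ne_of_gt ht)).const_mul c)
  apply monotoneOn_of_deriv_nonneg (convex_Ioi 0)
  · exact fun t ht => (hd t ht).continuousAt.continuousWithinAt
  · intro t ht
    rw [interior_Ioi] at ht
    exact (hd t ht).differentiableAt.differentiableWithinAt
  · intro t ht
    rw [interior_Ioi] at ht
    rw [(hd t ht).deriv]
    have ht' : (0:ℝ) < t := ht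
    have hbt := hb t ht'
    rw [sub_nonneg, show c * t⁻¹ = c / t by ring, div_le_iff₀ ht']
    nlinarith

private lemma key_ineq (h : ℝ → ℝ) (hm : MonotoneOn h (Set.Ioi 0)) {a b : ℝ}
    (ha : 0 < a) (hb : 0 < b) : 0 ≤ (b - a) * (h (b / a) - h 1) := by
  rcases le_or_gt a b with hab | hab
  · have ht : (1:ℝ) ≤ b / a := (one_le_div ha).2 hab
    have := hm (Set.mem_Ioi.2 one_pos) (Set.mem_Ioi.2 (lt_of_lt_of_le one_pos ht)) ht
    exact mul_nonneg (sub_nonneg.2 hab) (sub_nonneg.2 this)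
  · have ht : b / a ≤ 1 := le_of_lt ((div_lt_one ha).2 hab)
    have := hm (Set.mem_Ioi.2 (div_pos hb ha)) (Set.mem_Ioi.2 one_pos) ht
    nlinarith [sub_nonpos.2 hab.le, sub_nonpos.2 this]

theorem delta_divergence_jeffreys_bounds
    {X : Type*} [MeasurableSpace X] (μ : Measure X)
    (p q : X → ℝ) (g g' : ℝ → ℝ) (φ Φ : ℝ)
    (hp0 : ∀ x, 0 ≤ p x) (hq0 : ∀ x, 0 ≤ q x)
    (hppos : ∀ᵐ x ∂μ, 0 < p x) (hqpos : ∀ᵐ x ∂μ, 0 < q x)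
    (hpm : Measurable p) (hqm : Measurable q) (hgm : Measurable g)
    (hp : Integrable p μ) (hq : Integrable q μ)
    (hp1 : ∫ x, p x ∂μ = 1) (hq1 : ∫ x, q x ∂μ = 1)
    (hderiv : ∀ t > (0:ℝ), HasDerivAt g (g' t) t)
    (hbound : ∀ t > (0:ℝ), φ ≤ t * g' t ∧ t * g' t ≤ Φ)
    (hint : Integrable (fun x => (q x - p x) * g (q x / p x)) μ)
    (hint2 : Integrable (fun x => (q x - p x) * Real.log (q x / p x)) μ) :
    φ * ∫ x, (q x - p x) * Real.log (q x / p x) ∂μ ≤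
        (∫ x, (q x - p x) * g (q x / p x) ∂μ) ∧
      (∫ x, (q x - p x) * g (q x / p x) ∂μ) ≤
        Φ * ∫ x, (q x - p x) * Real.log (q x / p x) ∂μ := by
  have hmono1 : MonotoneOn (fun t => g t - φ * Real.log t) (Set.Ioi 0) :=
    mono_aux g g' φ hderiv (fun t ht => (hbound t ht).1)
  have hmono2 : MonotoneOn (fun t => Φ * Real.log t - g t) (Set.Ioi 0) := by
    have h := mono_aux (fun t => -g t) (fun t => -g' t) (-Φ)
      (fun t ht => (hderiv t ht).neg)
      (fun t ht => by
        show -Φ ≤ t * -g' t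
        have := (hbound t ht).2; rw [mul_neg]; linarith)
    intro a ha b hb hab
    have h2 := h ha hb hab
    simp only at h2 ⊢
    linarith
  -- pointwise a.e. inequalities
  have hpt : ∀ᵐ x ∂μ,
      φ * ((q x - p x) * Real.log (q x / p x)) + (q x - p x) * g 1
        ≤ (q x - p x) * g (q x / p x)
      ∧ (q x - p x) * g (q x / p x)
        ≤ Φ * ((q x - p x) * Real.log (q x / p x)) + (q x - p x) * g 1 := by
    filter_upwards [hppos, hqpos] with x hpx hqx
    have h1 := key_ineq _ hmono1 hpx hqx
    have h2 := key_ineq _ hmono2 hpx hqx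
    simp only [Real.log_one] at h1 h2
    constructor <;> nlinarith [h1, h2]
  have hbase : Integrable (fun x => (q x - p x) * g 1) μ := (hq.sub hp).mul_const (g 1)
  have hzero : ∫ x, (q x - p x) * g 1 ∂μ = 0 := by
    rw [integral_mul_const, integral_sub hq hp, hq1, hp1]
    ring
  have heq1 : φ * ∫ x, (q x - p x) * Real.log (q x / p x) ∂μ
      = ∫ x, (φ * ((q x - p x) * Real.log (q x / p x)) + (q x - p x) * g 1) ∂μ := by
    rw [integral_add (hint2.const_mul φ) hbase, integral_const_mul, hzero, add_zero]
  have heq2 : Φ * ∫ x, (q x - p x) * Real.log (q x / p x) ∂μ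
      = ∫ x, (Φ * ((q x - p x) * Real.log (q x / p x)) + (q x - p x) * g 1) ∂μ := by
    rw [integral_add (hint2.const_mul Φ) hbase, integral_const_mul, hzero, add_zero]
  constructor
  · rw [heq1]
    exact integral_mono_ae ((hint2.const_mul φ).add hbase) hint (hpt.mono fun x hx => hx.1)
  · rw [heq2]
    exact integral_mono_ae hint ((hint2.const_mul Φ).add hbase) (hpt.mono fun x hx => hx.2)
end

section
/- Let f : [0,∞) → ℝ be differentiable and convex on (0,∞) with f(1) = 0, and suppose there exist constants φ, Φ with φ(t-1)² + t·f(t) ≤ t(t-1)·f'(t) ≤ t·f(t) + Φ(t-1)² for all t > 0. Then φ·J(Q,P) ≤ I_f(Q,P) ≤ Φ·J(Q,P) for any probability densities p, q with respect to μ. -/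
open Set MeasureTheory Filter Topology

private lemma jeffreys_key (f f' : ℝ → ℝ) (φ : ℝ) (hf1 : f 1 = 0)
    (hderiv : ∀ t > (0:ℝ), HasDerivAt f (f' t) t)
    (hb : ∀ t > (0:ℝ), φ * (t - 1) ^ 2 + t * f t ≤ t * (t - 1) * f' t) :
    ∀ t > (0:ℝ), φ * (t - 1) * Real.log t + f' 1 * (t - 1) ≤ f t := by
  set K : ℝ → ℝ := fun s => f s / (s - 1) - φ * Real.log s with hKdef
  have hKderiv : ∀ s, 0 < s → s ≠ 1 →
      HasDerivAt K ((f' s * (s - 1) - f s * 1) / (s - 1) ^ 2 - φ * s⁻¹) s := by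
    intro s hs hne
    exact ((hderiv s hs).div ((hasDerivAt_id s).sub_const 1) (sub_ne_zero.mpr hne)).sub
      ((Real.hasDerivAt_log (ne_of_gt hs)).const_mul φ)
  have hKnonneg : ∀ s, 0 < s → s ≠ 1 →
      0 ≤ (f' s * (s - 1) - f s * 1) / (s - 1) ^ 2 - φ * s⁻¹ := by
    intro s hs hne
    have hs1 : s - 1 ≠ 0 := sub_ne_zero.mpr hne
    have hsq : (0:ℝ) < (s - 1) ^ 2 := by positivity
    have hbs := hb s hs
    rw [sub_nonneg]
    have hφ : φ * s⁻¹ = φ / s := (div_eq_mul_inv φ s).symm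
    rw [hφ, div_le_div_iff₀ hs hsq]
    nlinarith
  have hmono1 : MonotoneOn K (Ioi 1) := by
    apply monotoneOn_of_deriv_nonneg (convex_Ioi 1)
    · intro s hs
      exact ((hKderiv s (lt_trans one_pos hs) (ne_of_gt hs)).continuousAt).continuousWithinAt
    · intro s hs
      rw [interior_Ioi] at hs
      exact ((hKderiv s (lt_trans one_pos hs) (ne_of_gt hs)).differentiableAt).differentiableWithinAt
    · intro s hs
      rw [interior_Ioi] at hs
      rw [(hKderiv s (lt_trans one_pos hs) (ne_of_gt hs)).deriv]
      exact hKnonneg s (lt_trans one_pos hs) (ne_of_gt hs)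
  have hmono0 : MonotoneOn K (Ioo 0 1) := by
    apply monotoneOn_of_deriv_nonneg (convex_Ioo 0 1)
    · intro s hs
      exact ((hKderiv s hs.1 (ne_of_lt hs.2)).continuousAt).continuousWithinAt
    · intro s hs
      rw [interior_Ioo] at hs
      exact ((hKderiv s hs.1 (ne_of_lt hs.2)).differentiableAt).differentiableWithinAt
    · intro s hs
      rw [interior_Ioo] at hs
      rw [(hKderiv s hs.1 (ne_of_lt hs.2)).deriv]
      exact hKnonneg s hs.1 (ne_of_lt hs.2)
  have htend : Tendsto K (𝓝[≠] (1:ℝ)) (𝓝 (f' 1)) := by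
    have h1 : Tendsto (slope f 1) (𝓝[≠] (1:ℝ)) (𝓝 (f' 1)) :=
      hasDerivAt_iff_tendsto_slope.mp (hderiv 1 one_pos)
    have h2 : Tendsto (fun s => φ * Real.log s) (𝓝[≠] (1:ℝ)) (𝓝 (φ * Real.log 1)) :=
      (((Real.continuousAt_log one_ne_zero).tendsto).const_mul φ).mono_left nhdsWithin_le_nhds
    have h3 := h1.sub h2
    have heq : ∀ᶠ s in 𝓝[≠] (1:ℝ), slope f 1 s - φ * Real.log s = K s := by
      filter_upwards [self_mem_nhdsWithin] with s hs
      simp [hKdef, slope_def_field, hf1]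
    simpa using h3.congr' heq
  intro t ht
  rcases lt_trichotomy t 1 with hlt | heqt | hgt
  · have hmem : t ∈ Ioo (0:ℝ) 1 := ⟨ht, hlt⟩
    have hev : ∀ᶠ s in 𝓝[<] (1:ℝ), K t ≤ K s := by
      filter_upwards [Ico_mem_nhdsLT_of_mem (⟨hlt, le_refl 1⟩ : (1:ℝ) ∈ Ioc t 1)] with s hs
      exact hmono0 hmem ⟨lt_of_lt_of_le ht hs.1, hs.2⟩ hs.1
    have hsub : Iio (1:ℝ) ⊆ {(1:ℝ)}ᶜ := fun s hs => ne_of_lt hs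
    have hle : K t ≤ f' 1 :=
      ge_of_tendsto (htend.mono_left (nhdsWithin_mono 1 hsub)) hev
    have ht1 : t - 1 < 0 := by linarith
    have hdiv : f t / (t - 1) ≤ φ * Real.log t + f' 1 := by
      simp only [hKdef] at hle; linarith
    have h2 := (div_le_iff_of_neg ht1).mp hdiv
    nlinarith [h2]
  · subst heqt; simp [hf1]
  · have hev : ∀ᶠ s in 𝓝[>] (1:ℝ), K s ≤ K t := by
      filter_upwards [Ioc_mem_nhdsGT_of_mem (⟨le_refl 1, hgt⟩ : (1:ℝ) ∈ Ico 1 t)] with s hs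
      exact hmono1 hs.1 hgt hs.2
    have hsub : Ioi (1:ℝ) ⊆ {(1:ℝ)}ᶜ := fun s hs => ne_of_gt hs
    have hle : f' 1 ≤ K t :=
      le_of_tendsto (htend.mono_left (nhdsWithin_mono 1 hsub)) hev
    have ht1 : (0:ℝ) < t - 1 := by linarith
    have hdiv : φ * Real.log t + f' 1 ≤ f t / (t - 1) := by
      simp only [hKdef] at hle; linarith
    have h2 := (le_div_iff₀ ht1).mp hdiv
    nlinarith [h2]

theorem f_divergence_jeffreys_bounds
    {X : Type*} [MeasurableSpace X] (μ : Measure X)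
    (p q : X → ℝ) (f f' : ℝ → ℝ) (φ Φ : ℝ)
    (hp0 : ∀ x, 0 ≤ p x) (hq0 : ∀ x, 0 ≤ q x)
    (hppos : ∀ᵐ x ∂μ, 0 < p x) (hqpos : ∀ᵐ x ∂μ, 0 < q x)
    (hpm : Measurable p) (hqm : Measurable q) (hfm : Measurable f)
    (hp : Integrable p μ) (hq : Integrable q μ)
    (hp1 : ∫ x, p x ∂μ = 1) (hq1 : ∫ x, q x ∂μ = 1)
    (hconv : ConvexOn ℝ (Ioi 0) f) (hf1 : f 1 = 0)
    (hderiv : ∀ t > (0:ℝ), HasDerivAt f (f' t) t)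
    (hbound : ∀ t > (0:ℝ),
      φ * (t - 1) ^ 2 + t * f t ≤ t * (t - 1) * f' t ∧
        t * (t - 1) * f' t ≤ t * f t + Φ * (t - 1) ^ 2)
    (hint : Integrable (fun x => p x * f (q x / p x)) μ)
    (hint2 : Integrable (fun x => (q x - p x) * Real.log (q x / p x)) μ) :
    φ * ∫ x, (q x - p x) * Real.log (q x / p x) ∂μ ≤
        (∫ x, p x * f (q x / p x) ∂μ) ∧
      (∫ x, p x * f (q x / p x) ∂μ) ≤
        Φ * ∫ x, (q x - p x) * Real.log (q x / p x) ∂μ := by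
  set c := f' 1 with hc
  have hlow := jeffreys_key f f' φ hf1 hderiv (fun t ht => (hbound t ht).1)
  have hupp : ∀ t > (0:ℝ), f t ≤ Φ * (t - 1) * Real.log t + c * (t - 1) := by
    have := jeffreys_key (fun t => -f t) (fun t => -f' t) (-Φ) (by simp [hf1])
      (fun t ht => (hderiv t ht).neg)
      (fun t ht => by
        show -Φ * (t - 1) ^ 2 + t * (-f t) ≤ t * (t - 1) * (-f' t)
        nlinarith [(hbound t ht).2])
    intro t ht
    have h := this t ht
    linarith
  have haeL : ∀ᵐ x ∂μ, φ * ((q x - p x) * Real.log (q x / p x)) + c * (q x - p x)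
      ≤ p x * f (q x / p x) := by
    filter_upwards [hppos, hqpos] with x hpx hqx
    have htpos : 0 < q x / p x := div_pos hqx hpx
    have h := hlow (q x / p x) htpos
    have hmul := mul_le_mul_of_nonneg_left h (le_of_lt hpx)
    have hid : p x * (φ * (q x / p x - 1) * Real.log (q x / p x) + c * (q x / p x - 1))
        = φ * ((q x - p x) * Real.log (q x / p x)) + c * (q x - p x) := by
      field_simp
    linarith [hid ▸ hmul]
  have haeU : ∀ᵐ x ∂μ, p x * f (q x / p x)
      ≤ Φ * ((q x - p x) * Real.log (q x / p x)) + c * (q x - p x) := by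
    filter_upwards [hppos, hqpos] with x hpx hqx
    have htpos : 0 < q x / p x := div_pos hqx hpx
    have h := hupp (q x / p x) htpos
    have hmul := mul_le_mul_of_nonneg_left h (le_of_lt hpx)
    have hid : p x * (Φ * (q x / p x - 1) * Real.log (q x / p x) + c * (q x / p x - 1))
        = Φ * ((q x - p x) * Real.log (q x / p x)) + c * (q x - p x) := by
      field_simp
    linarith [hid ▸ hmul]
  have hIntg : Integrable (fun x => (q x - p x) * Real.log (q x / p x)) μ := hint2
  have hInth : Integrable (fun x => q x - p x) μ := hq.sub hp
  have hIntL : Integrable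
      (fun x => φ * ((q x - p x) * Real.log (q x / p x)) + c * (q x - p x)) μ :=
    (hIntg.const_mul φ).add (hInth.const_mul c)
  have hIntU : Integrable
      (fun x => Φ * ((q x - p x) * Real.log (q x / p x)) + c * (q x - p x)) μ :=
    (hIntg.const_mul Φ).add (hInth.const_mul c)
  have hcomb : ∀ a : ℝ, ∫ x, (a * ((q x - p x) * Real.log (q x / p x)) + c * (q x - p x)) ∂μ
      = a * ∫ x, (q x - p x) * Real.log (q x / p x) ∂μ := by
    intro a
    rw [integral_add (hIntg.const_mul a) (hInth.const_mul c), integral_const_mul,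
      integral_const_mul, integral_sub hq hp, hq1, hp1]
    simp
  constructor
  · have h1 := integral_mono_ae hIntL hint haeL
    rw [hcomb φ] at h1
    exact h1
  · have h1 := integral_mono_ae hint hIntU haeU
    rw [hcomb Φ] at h1
    exact h1
end

section
/- Let f : [0,∞) → ℝ be continuous convex with f(1) = 0, λ in the subdifferential of f at 1, K > 0 and α > 0 such that |f(t) - λ(t-1)| ≤ K|t-1|^{α+1} for all t ≥ 0. Then for any probability densities p, q with respect to μ: 0 ≤ I_f(Q,P) ≤ K·∫ p^{-α}|q - p|^{α+1} dμ. -/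
open Set MeasureTheory

/-!
Pointwise, with `t = q / p`, the hypotheses sandwich `f t` between the tangent line `λ (t - 1)` and
`λ (t - 1) + K |t - 1| ^ (α + 1)`. Multiplying by `p` turns this into
`λ (q - p) ≤ p f (q / p) ≤ λ (q - p) + K p ^ (-α) |q - p| ^ (α + 1)`, and the linear term integrates
to `λ (∫ q - ∫ p) = 0`.
-/

section Perspective

lemma mul_div_sub_one {p : ℝ} (hp : p ≠ 0) (q : ℝ) : p * (q / p - 1) = q - p := by
  field_simp

lemma mul_abs_div_sub_one_rpow {p : ℝ} (hp : 0 < p) (q β : ℝ) :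
    p * |q / p - 1| ^ (β + 1) = p ^ (-β) * |q - p| ^ (β + 1) := by
  have hpow : p ^ (β + 1) = p * p ^ β := by rw [Real.rpow_add_one hp.ne', mul_comm]
  rw [← mul_div_sub_one hp.ne' q, abs_mul, abs_of_pos hp,
    Real.mul_rpow hp.le (abs_nonneg _), hpow, Real.rpow_neg hp.le]
  field_simp

variable {f : ℝ → ℝ} {lam K α p q : ℝ}

lemma linear_le_mul_apply_div (hp : 0 < p) (hq : 0 ≤ q)
    (hlam : ∀ t ≥ (0:ℝ), lam * (t - 1) ≤ f t) :
    lam * (q - p) ≤ p * f (q / p) := by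
  calc lam * (q - p) = p * (lam * (q / p - 1)) := by rw [mul_left_comm, mul_div_sub_one hp.ne']
    _ ≤ p * f (q / p) := mul_le_mul_of_nonneg_left (hlam _ (div_nonneg hq hp.le)) hp.le

lemma mul_apply_div_le (hp : 0 < p) (hq : 0 ≤ q)
    (hcond : ∀ t ≥ (0:ℝ), f t - lam * (t - 1) ≤ K * |t - 1| ^ (α + 1)) :
    p * f (q / p) ≤ lam * (q - p) + K * (p ^ (-α) * |q - p| ^ (α + 1)) := by
  calc p * f (q / p) ≤ p * (lam * (q / p - 1) + K * |q / p - 1| ^ (α + 1)) := by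
        gcongr
        linarith [hcond _ (div_nonneg hq hp.le)]
    _ = lam * (p * (q / p - 1)) + K * (p * |q / p - 1| ^ (α + 1)) := by ring
    _ = lam * (q - p) + K * (p ^ (-α) * |q - p| ^ (α + 1)) := by
        rw [mul_div_sub_one hp.ne', mul_abs_div_sub_one_rpow hp]

end Perspective

theorem f_divergence_chi_alpha_bounds_general
    {X : Type*} [MeasurableSpace X] (μ : Measure X)
    (p q : X → ℝ) (f : ℝ → ℝ) (lam K α : ℝ)
    (hq0 : ∀ x, 0 ≤ q x)
    (hppos : ∀ᵐ x ∂μ, 0 < p x)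
    (hp : Integrable p μ) (hq : Integrable q μ)
    (hp1 : ∫ x, p x ∂μ = 1) (hq1 : ∫ x, q x ∂μ = 1)
    (hlam : ∀ t ≥ (0:ℝ), lam * (t - 1) ≤ f t)
    (hcond : ∀ t ≥ (0:ℝ), |f t - lam * (t - 1)| ≤ K * |t - 1| ^ (α + 1))
    (hint : Integrable (fun x => p x * f (q x / p x)) μ)
    (hint2 : Integrable (fun x => p x ^ (-α) * |q x - p x| ^ (α + 1)) μ) :
    0 ≤ (∫ x, p x * f (q x / p x) ∂μ) ∧
      (∫ x, p x * f (q x / p x) ∂μ) ≤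
        K * ∫ x, p x ^ (-α) * |q x - p x| ^ (α + 1) ∂μ := by
  have hlin : Integrable (fun x => lam * (q x - p x)) μ := (hq.sub hp).const_mul lam
  have hlin0 : ∫ x, lam * (q x - p x) ∂μ = 0 := by
    rw [integral_const_mul, integral_sub hq hp, hq1, hp1, sub_self, mul_zero]
  have hupper : ∀ t ≥ (0:ℝ), f t - lam * (t - 1) ≤ K * |t - 1| ^ (α + 1) :=
    fun t ht => (le_abs_self _).trans (hcond t ht)
  constructor
  · calc 0 = ∫ x, lam * (q x - p x) ∂μ := hlin0.symm
      _ ≤ ∫ x, p x * f (q x / p x) ∂μ := integral_mono_ae hlin hint <|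
          hppos.mono fun x hx => linear_le_mul_apply_div hx (hq0 x) hlam
  · calc ∫ x, p x * f (q x / p x) ∂μ
        ≤ ∫ x, lam * (q x - p x) + K * (p x ^ (-α) * |q x - p x| ^ (α + 1)) ∂μ :=
          integral_mono_ae hint (hlin.add (hint2.const_mul K)) <|
            hppos.mono fun x hx => mul_apply_div_le hx (hq0 x) hupper
      _ = K * ∫ x, p x ^ (-α) * |q x - p x| ^ (α + 1) ∂μ := by
          rw [integral_add hlin (hint2.const_mul K), hlin0, zero_add, integral_const_mul]

theorem f_divergence_chi_alpha_bounds
    {X : Type*} [MeasurableSpace X] (μ : Measure X)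
    (p q : X → ℝ) (f : ℝ → ℝ) (lam K α : ℝ)
    (hK : 0 < K) (hα : 0 < α)
    (hp0 : ∀ x, 0 ≤ p x) (hq0 : ∀ x, 0 ≤ q x)
    (hppos : ∀ᵐ x ∂μ, 0 < p x)
    (hpm : Measurable p) (hqm : Measurable q) (hfm : Measurable f)
    (hp : Integrable p μ) (hq : Integrable q μ)
    (hp1 : ∫ x, p x ∂μ = 1) (hq1 : ∫ x, q x ∂μ = 1)
    (hconv : ConvexOn ℝ (Ici 0) f) (hfc : ContinuousOn f (Ici 0))
    (hf1 : f 1 = 0)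
    (hlam : ∀ t ≥ (0:ℝ), lam * (t - 1) ≤ f t)
    (hcond : ∀ t ≥ (0:ℝ), |f t - lam * (t - 1)| ≤ K * |t - 1| ^ (α + 1))
    (hint : Integrable (fun x => p x * f (q x / p x)) μ)
    (hint2 : Integrable (fun x => p x ^ (-α) * |q x - p x| ^ (α + 1)) μ) :
    0 ≤ (∫ x, p x * f (q x / p x) ∂μ) ∧
      (∫ x, p x * f (q x / p x) ∂μ) ≤
        K * ∫ x, p x ^ (-α) * |q x - p x| ^ (α + 1) ∂μ :=
  f_divergence_chi_alpha_bounds_general μ p q f lam K α hq0 hppos hp hq hp1 hq1 hlam hcond hint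
    hint2
end
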